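/- For any closed one-parameter subgroup (circle) S ⊂ G₂ acting via the standard 7-dimensional representation, the fixed-point subspace {v ∈ ℝ⁷ : s·v = v for all s ∈ S} has dimension at most 3. -/

import Mathlib

/-- The elementary 3-form `e^{ijk}` on `ℝ⁷`. -/
def eForm (i j k : Fin 7) (X Y Z : Fin 7 → ℝ) : ℝ :=
  Matrix.det !![X i, X j, X k; Y i, Y j, Y k; Z i, Z j, Z k]

/-- The standard G₂ 3-form `φ₀` on `ℝ⁷`. -/
def phi0 (X Y Z : Fin 7 → ℝ) : ℝ :=
  eForm 0 1 2 X Y Z + eForm 0 3 4 X Y Z + eForm 0 5 6 X Y Z + eForm 1 3 5 X Y Z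
    - eForm 1 4 6 X Y Z - eForm 2 3 6 X Y Z - eForm 2 4 5 X Y Z

/-- `A ∈ G₂ ⊂ SO(7)`: `A` preserves the standard G₂-form `φ₀`. -/
def MemG2 (A : GL (Fin 7) ℝ) : Prop :=
  ∀ X Y Z, phi0 ((A : Matrix (Fin 7) (Fin 7) ℝ).mulVec X)
    ((A : Matrix (Fin 7) (Fin 7) ℝ).mulVec Y) ((A : Matrix (Fin 7) (Fin 7) ℝ).mulVec Z)
      = phi0 X Y Z

/-- The fixed-point subspace `{v ∈ ℝ⁷ : s·v = v for all s ∈ S}` of a circle subgroup,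
given as the continuous image of the circle under `f`. -/
def fixedSpaceOfCircle (f : Circle →* GL (Fin 7) ℝ) : Submodule ℝ (Fin 7 → ℝ) where
  carrier := {v | ∀ z : Circle, ((f z : GL (Fin 7) ℝ) : Matrix (Fin 7) (Fin 7) ℝ).mulVec v = v}
  add_mem' := by
    intro v w hv hw z
    rw [Matrix.mulVec_add, hv z, hw z]
  zero_mem' := by
    intro z
    rw [Matrix.mulVec_zero]
  smul_mem' := by
    intro c v hv z
    rw [Matrix.mulVec_smul, hv z]


/-!
Let `A ≠ 1` be an element of the circle; it preserves `φ₀` and its fixed space `F` contains that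
of the circle. Orthogonality of `A` is not available a priori, so the cross product `×` of `φ₀`
is equivariant only in the twisted form `Aᵀ (A x × A y) = x × y`, so `F × F` lies in the fixed space `F'`
of `Aᵀ`. If some `v ⊥ F'` is not fixed by `A`, then `w ↦ v × w` embeds `F` into `F^⊥`, because
`⟪v × w, u⟫ = ⟪w × u, v⟫ = 0`; hence `2 dim F ≤ 7`. Otherwise the image of `A - 1`, which is
always orthogonal to `F'`, lies in `F`, so `N = A - 1` squares to zero. Then `A ^ k = 1 + k N`
preserves `φ₀` for all `k`, which makes `N` a derivation of `φ₀`, hence skew (`𝔤₂ ⊆ 𝔰𝔬(7)`),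
and `Nᵀ N = -N² = 0` forces `N = 0`.
-/

open Matrix Module

def cross (x y : Fin 7 → ℝ) : Fin 7 → ℝ
  | 0 => (x 1 * y 2 - x 2 * y 1) + (x 3 * y 4 - x 4 * y 3) + (x 5 * y 6 - x 6 * y 5)
  | 1 => -(x 0 * y 2 - x 2 * y 0) + (x 3 * y 5 - x 5 * y 3) - (x 4 * y 6 - x 6 * y 4)
  | 2 => (x 0 * y 1 - x 1 * y 0) - (x 3 * y 6 - x 6 * y 3) - (x 4 * y 5 - x 5 * y 4)
  | 3 => -(x 0 * y 4 - x 4 * y 0) - (x 1 * y 5 - x 5 * y 1) + (x 2 * y 6 - x 6 * y 2)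
  | 4 => (x 0 * y 3 - x 3 * y 0) + (x 1 * y 6 - x 6 * y 1) + (x 2 * y 5 - x 5 * y 2)
  | 5 => -(x 0 * y 6 - x 6 * y 0) + (x 1 * y 3 - x 3 * y 1) - (x 2 * y 4 - x 4 * y 2)
  | 6 => (x 0 * y 5 - x 5 * y 0) - (x 1 * y 4 - x 4 * y 1) - (x 2 * y 3 - x 3 * y 2)

def crossLeft (x : Fin 7 → ℝ) : (Fin 7 → ℝ) →ₗ[ℝ] (Fin 7 → ℝ) where
  toFun := cross x
  map_add' y y' := by funext k; fin_cases k <;> simp [cross] <;> ring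
  map_smul' c y := by funext k; fin_cases k <;> simp [cross] <;> ring

lemma eForm_apply (i j k : Fin 7) (X Y Z : Fin 7 → ℝ) :
    eForm i j k X Y Z = X i * (Y j * Z k - Y k * Z j) - X j * (Y i * Z k - Y k * Z i)
      + X k * (Y i * Z j - Y j * Z i) := by
  simp [eForm, det_fin_three]
  ring

lemma cross_dotProduct (x y z : Fin 7 → ℝ) : cross x y ⬝ᵥ z = phi0 x y z := by
  simp only [cross, phi0, eForm_apply, dotProduct, Fin.sum_univ_seven]
  ring

lemma phi0_rotate (x y z : Fin 7 → ℝ) : phi0 x y z = phi0 y z x := by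
  simp only [phi0, eForm_apply]
  ring

lemma phi0_add_smul (x y z a b c : Fin 7 → ℝ) (t : ℝ) :
    phi0 (x + t • a) (y + t • b) (z + t • c) = phi0 x y z
      + t * (phi0 a y z + phi0 x b z + phi0 x y c)
      + t ^ 2 * (phi0 a b z + phi0 a y c + phi0 x b c) + t ^ 3 * phi0 a b c := by
  simp only [phi0, eForm_apply, Pi.add_apply, Pi.smul_apply, smul_eq_mul]
  ring

lemma cross_dotProduct_cross (x y : Fin 7 → ℝ) :
    cross x y ⬝ᵥ cross x y = (x ⬝ᵥ x) * (y ⬝ᵥ y) - (x ⬝ᵥ y) ^ 2 := by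
  simp only [cross, dotProduct, Fin.sum_univ_seven]
  ring

lemma smul_eq_smul_of_cross_eq_zero {x y : Fin 7 → ℝ} (h : cross x y = 0) :
    (y ⬝ᵥ y) • x = (x ⬝ᵥ y) • y := by
  have hxy : (x ⬝ᵥ x) * (y ⬝ᵥ y) - (x ⬝ᵥ y) ^ 2 = 0 := by
    rw [← cross_dotProduct_cross, h, dotProduct_zero]
  rw [← sub_eq_zero, ← dotProduct_self_eq_zero]
  simp only [sub_dotProduct, dotProduct_sub, smul_dotProduct, dotProduct_smul, smul_eq_mul,
    dotProduct_comm y x]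
  linear_combination (y ⬝ᵥ y) * hxy

set_option maxHeartbeats 1000000 in
/-- `𝔤₂ ⊆ 𝔰𝔬(7)`: the derivation identity on the basis triples `a < b < c` is a linear system
in the entries of `N` that forces `N + Nᵀ = 0`. -/
lemma transpose_eq_neg_of_phi0_derivation {N : Matrix (Fin 7) (Fin 7) ℝ}
    (hN : ∀ x y z, phi0 (N *ᵥ x) y z + phi0 x (N *ᵥ y) z + phi0 x y (N *ᵥ z) = 0) :
    Nᵀ = -N := by
  have h : ∀ a b c : Fin 7, a < b → b < c → _ := fun a b c _ _ =>
    hN (Pi.single a 1) (Pi.single b 1) (Pi.single c 1)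
  simp only [Fin.forall_fin_succ, Fin.succ_lt_succ_iff, Fin.succ_pos, Fin.not_lt_zero,
    IsEmpty.forall_iff, forall_const, and_true] at h
  simp [phi0, eForm_apply, mulVec_single, Fin.ext_iff] at h
  ext i j
  fin_cases i <;> fin_cases j <;> simp <;> linarith

lemma one_add_pow_of_mul_self_eq_zero {R : Type*} [Ring R] {N : R} (hN : N * N = 0) (k : ℕ) :
    (1 + N) ^ k = 1 + k • N := by
  induction k with
  | zero => simp
  | succ k ih =>
    rw [pow_succ, ih, add_mul, one_mul, mul_add, mul_one, smul_mul_assoc, hN, smul_zero,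
      add_zero, succ_nsmul]
    abel

lemma finrank_add_finrank_le_of_dotProduct_eq_zero {n K : Type*} [Fintype n] [Field K]
    [LinearOrder K] [IsStrictOrderedRing K] {U W : Submodule K (n → K)}
    (h : ∀ u ∈ U, ∀ w ∈ W, u ⬝ᵥ w = 0) : finrank K U + finrank K W ≤ Fintype.card n := by
  rw [← finrank_fintype_fun_eq_card K]
  refine Submodule.finrank_add_finrank_le_of_disjoint (Submodule.disjoint_def.2 fun v hU hW => ?_)
  exact dotProduct_self_eq_zero.1 (h v hU v hW)

section FixedVectors

variable {n R : Type*} [Fintype n] [CommRing R]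

def fixedVectors (A : Matrix n n R) : Submodule R (n → R) :=
  LinearMap.eqLocus A.mulVecLin LinearMap.id

lemma mem_fixedVectors {A : Matrix n n R} {v : n → R} : v ∈ fixedVectors A ↔ A *ᵥ v = v :=
  Iff.rfl

lemma dotProduct_mulVec_sub_eq_zero {A : Matrix n n R} {w : n → R}
    (hw : w ∈ fixedVectors Aᵀ) (u : n → R) : w ⬝ᵥ (A *ᵥ u - u) = 0 := by
  rw [dotProduct_sub, dotProduct_mulVec, ← mulVec_transpose, mem_fixedVectors.1 hw, sub_self]

lemma sub_one_mul_sub_one_eq_zero [DecidableEq n] {A : Matrix n n R}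
    (h : ∀ v, (∀ w ∈ fixedVectors Aᵀ, w ⬝ᵥ v = 0) → v ∈ fixedVectors A) :
    (A - 1) * (A - 1) = 0 := by
  refine ext_iff_mulVec.2 fun u => ?_
  have hfix := mem_fixedVectors.1 (h _ fun w hw => dotProduct_mulVec_sub_eq_zero hw u)
  rw [← mulVec_mulVec, sub_mulVec, one_mulVec, sub_mulVec (A := A), one_mulVec, hfix,
    sub_self, zero_mulVec]

end FixedVectors

def PreservesPhi0 (A : Matrix (Fin 7) (Fin 7) ℝ) : Prop :=
  ∀ X Y Z, phi0 (A *ᵥ X) (A *ᵥ Y) (A *ᵥ Z) = phi0 X Y Z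

namespace PreservesPhi0

variable {A : Matrix (Fin 7) (Fin 7) ℝ}

lemma pow (hA : PreservesPhi0 A) (k : ℕ) : PreservesPhi0 (A ^ k) := by
  induction k with
  | zero => simp [PreservesPhi0]
  | succ k ih =>
    intro x y z
    rw [pow_succ', ← mulVec_mulVec, ← mulVec_mulVec, ← mulVec_mulVec, hA _ _ _, ih _ _ _]

lemma transpose_mulVec_cross_mulVec (hA : PreservesPhi0 A) (x y : Fin 7 → ℝ) :
    Aᵀ *ᵥ cross (A *ᵥ x) (A *ᵥ y) = cross x y :=
  dotProduct_eq _ _ fun z => by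
    rw [mulVec_transpose, ← dotProduct_mulVec, cross_dotProduct, cross_dotProduct, hA _ _ _]

lemma cross_mem_fixedVectors_transpose (hA : PreservesPhi0 A) {x y : Fin 7 → ℝ}
    (hx : x ∈ fixedVectors A) (hy : y ∈ fixedVectors A) : cross x y ∈ fixedVectors Aᵀ := by
  have h := hA.transpose_mulVec_cross_mulVec x y
  rwa [mem_fixedVectors.1 hx, mem_fixedVectors.1 hy] at h

lemma phi0_derivation (hA : PreservesPhi0 A) (hN : (A - 1) * (A - 1) = 0) (x y z : Fin 7 → ℝ) :
    phi0 ((A - 1) *ᵥ x) y z + phi0 x ((A - 1) *ᵥ y) z + phi0 x y ((A - 1) *ᵥ z) = 0 := by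
  have hpow (k : ℕ) : A ^ k = 1 + (k : ℝ) • (A - 1) := by
    simpa [Nat.cast_smul_eq_nsmul] using one_add_pow_of_mul_self_eq_zero hN k
  have h (k : ℕ) := (hA.pow k) x y z
  simp only [hpow, add_mulVec, one_mulVec, smul_mulVec, phi0_add_smul] at h
  -- a cubic in `k` without constant term, vanishing at `k = 1, 2, 3`
  linear_combination 3 * h 1 - 3 / 2 * h 2 + 1 / 3 * h 3

lemma eq_one_of_forall_orthogonal_mem_fixedVectors (hA : PreservesPhi0 A)
    (h : ∀ v, (∀ w ∈ fixedVectors Aᵀ, w ⬝ᵥ v = 0) → v ∈ fixedVectors A) : A = 1 := by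
  have hN := sub_one_mul_sub_one_eq_zero h
  have hskew := transpose_eq_neg_of_phi0_derivation (hA.phi0_derivation hN)
  have hsq : (A - 1)ᴴ * (A - 1) = 0 := by
    rw [conjTranspose_eq_transpose_of_trivial, hskew, neg_mul, hN, neg_zero]
  exact sub_eq_zero.1 (conjTranspose_mul_self_eq_zero.1 hsq)

lemma finrank_fixedVectors_le_three_of_orthogonal_not_mem (hA : PreservesPhi0 A)
    {v : Fin 7 → ℝ} (hv : ∀ w ∈ fixedVectors Aᵀ, w ⬝ᵥ v = 0) (hvA : v ∉ fixedVectors A) :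
    finrank ℝ (fixedVectors A) ≤ 3 := by
  set T := (crossLeft v).domRestrict (fixedVectors A)
  have hT : Function.Injective T := by
    refine (injective_iff_map_eq_zero T).2 fun ⟨w, hw⟩ hTw => ?_
    have hvw := smul_eq_smul_of_cross_eq_zero (x := v) (y := w) hTw
    by_contra hw0
    have hww : w ⬝ᵥ w ≠ 0 := fun h => hw0 (Subtype.ext (dotProduct_self_eq_zero.1 h))
    refine hvA ?_
    rw [← inv_smul_smul₀ hww v, hvw, smul_smul]
    exact Submodule.smul_mem _ _ hw
  have horth : ∀ u ∈ LinearMap.range T, ∀ w ∈ fixedVectors A, u ⬝ᵥ w = 0 := by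
    rintro _ ⟨⟨u, hu⟩, rfl⟩ w hw
    change cross v u ⬝ᵥ w = 0
    rw [cross_dotProduct, phi0_rotate, ← cross_dotProduct]
    exact hv _ (hA.cross_mem_fixedVectors_transpose hu hw)
  have hdim := finrank_add_finrank_le_of_dotProduct_eq_zero horth
  rw [LinearMap.finrank_range_of_inj hT, Fintype.card_fin] at hdim
  omega

theorem finrank_fixedVectors_le_three (hA : PreservesPhi0 A) (hA1 : A ≠ 1) :
    finrank ℝ (fixedVectors A) ≤ 3 := by
  by_cases h : ∃ v, (∀ w ∈ fixedVectors Aᵀ, w ⬝ᵥ v = 0) ∧ v ∉ fixedVectors A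
  · obtain ⟨v, hv, hvA⟩ := h
    exact hA.finrank_fixedVectors_le_three_of_orthogonal_not_mem hv hvA
  · push Not at h
    exact absurd (hA.eq_one_of_forall_orthogonal_mem_fixedVectors h) hA1

end PreservesPhi0

theorem circle_in_G2_fixed_space_dim_le_three_general
    (f : Circle →* GL (Fin 7) ℝ)
    (hG2 : ∀ z : Circle, MemG2 (f z)) (hnontrivial : ∃ z : Circle, f z ≠ 1) :
    Module.finrank ℝ (fixedSpaceOfCircle f) ≤ 3 := by
  obtain ⟨z, hz⟩ := hnontrivial
  have hfix : fixedSpaceOfCircle f ≤ fixedVectors (f z : Matrix (Fin 7) (Fin 7) ℝ) :=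
    fun v hv => hv z
  have hA : PreservesPhi0 (f z : Matrix (Fin 7) (Fin 7) ℝ) := hG2 z
  exact (Submodule.finrank_mono hfix).trans
    (hA.finrank_fixedVectors_le_three fun h => hz (Units.ext h))

/-- For any closed one-parameter subgroup (circle) `S ⊂ G₂` — the image of a nontrivial
continuous homomorphism from the circle, landing in `G₂` — acting via the standard
7-dimensional representation, the fixed-point subspace has dimension at most 3. -/
theorem circle_in_G2_fixed_space_dim_le_three
    (f : Circle →* GL (Fin 7) ℝ) (hcont : Continuous f)
    (hG2 : ∀ z : Circle, MemG2 (f z)) (hnontrivial : ∃ z : Circle, f z ≠ 1) :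
    Module.finrank ℝ (fixedSpaceOfCircle f) ≤ 3 :=
  circle_in_G2_fixed_space_dim_le_three_general f hG2 hnontrivial
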